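/- Under the hypotheses of the Strong LAP Argument, the joint distribution p(x_V | θ) and the conditional distribution p(x_j | x_{A_q \ {x_j}}, θ), for any x_j ∈ q, share the same zero-normalized potential for q: the q-potential of the conditional's unique zero-normalized Gibbs representation equals E_q(· | θ_q). -/

import Mathlib

/-!
Zero-normalized potentials are recovered from the energy by Möbius inversion,
`E_q(x) = ∑_{s ⊆ q} (-1)^{|q \ s|} H(x_s, z_{V \ s})`, and this alternating sum annihilates
every function that does not depend on some coordinate in `q`. The energy of the conditional is
`-log` of the `A`-marginal plus a function not depending on `x_j`. Let `i, k ∈ q` be the pair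
that is not path connected outside `A`, and `S` the set of vertices outside `A` reachable from
`i` by walks avoiding `A`. A clique meeting `S` lies in `A ∪ S` and does not contain `k`; a
clique that neither meets `S` nor lies inside `A` does not contain `i`. Summing out `V \ A`
therefore factorizes the marginal into `exp (-∑_{c ⊆ A} E_c)`, a factor free of `x_k` and a
factor free of `x_i`, so Möbius inversion of both energies returns `E_q`.
-/

/-- Path connectivity with respect to `V \ A`. -/
def RelPathConn {V : Type*} (G : SimpleGraph V) (A : Set V) (i j : V) : Prop :=
  ∃ w : G.Walk i j, w.IsPath ∧ w.support.tail.dropLast ≠ [] ∧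
    ∀ v ∈ w.support.tail.dropLast, v ∉ A

/-- The Strong LAP condition for a clique `q` and a set `A` with `q ⊆ A`. -/
def StrongLAP {V : Type*} (G : SimpleGraph V) (A q : Set V) : Prop :=
  q ⊆ A ∧ ∃ i ∈ q, ∃ j ∈ q, i ≠ j ∧ ¬ RelPathConn G A i j

/-- The marginal of `p` over the coordinates in `A`. -/
noncomputable def marginal {V : Type*} [Fintype V] [DecidableEq V]
    {X : V → Type*} [∀ v, Fintype (X v)] [∀ v, DecidableEq (X v)]
    (p : (∀ v, X v) → ℝ) (A : Finset V) (x : ∀ v, X v) : ℝ :=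
  ∑ y : ∀ v, X v, if ∀ v ∈ A, y v = x v then p y else 0

open Finset

section MobiusInversion

variable {V : Type*} [DecidableEq V] {X : V → Type*}

def mobiusPotential (z : ∀ v, X v) (q : Finset V) (x : ∀ v, X v) :
    ((∀ v, X v) → ℝ) →ₗ[ℝ] ℝ where
  toFun H := ∑ s ∈ q.powerset, (-1 : ℝ) ^ #(q \ s) * H (s.piecewise x z)
  map_add' H H' := by simp only [Pi.add_apply, mul_add, sum_add_distrib]
  map_smul' c H := by
    simp only [Pi.smul_apply, smul_eq_mul, RingHom.id_apply, mul_sum]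
    exact sum_congr rfl fun _ _ => mul_left_comm _ _ _

variable (z : ∀ v, X v) {q : Finset V} (x : ∀ v, X v)

lemma mobiusPotential_apply (H : (∀ v, X v) → ℝ) :
    mobiusPotential z q x H = ∑ s ∈ q.powerset, (-1 : ℝ) ^ #(q \ s) * H (s.piecewise x z) :=
  rfl

lemma sum_powerset_eq_sum_powerset_erase {M : Type*} [AddCommMonoid M] {t : V} (ht : t ∈ q)
    (f : Finset V → M) :
    ∑ s ∈ q.powerset, f s = ∑ s ∈ (q.erase t).powerset, (f s + f (insert t s)) := by
  rw [sum_add_distrib, ← sum_powerset_insert (notMem_erase t q), insert_erase ht]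

lemma mobiusPotential_eq_zero_of_dependsOn {t : V} (ht : t ∈ q) {H : (∀ v, X v) → ℝ}
    (hH : DependsOn H {t}ᶜ) : mobiusPotential z q x H = 0 := by
  rw [mobiusPotential_apply, sum_powerset_eq_sum_powerset_erase ht]
  refine sum_eq_zero fun s hs => ?_
  have hsq : s ⊆ q.erase t := mem_powerset.1 hs
  have hts : t ∉ s := fun h => notMem_erase t q (hsq h)
  have hinsq : insert t s ⊆ q := insert_subset ht (hsq.trans (erase_subset t q))
  have hcard : #(q \ s) = #(q \ insert t s) + 1 := by
    have := card_le_card hinsq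
    rw [card_sdiff_of_subset (hinsq.trans' (subset_insert t s)), card_sdiff_of_subset hinsq,
      card_insert_of_notMem hts] at *
    omega
  have hH' : H (s.piecewise x z) = H ((insert t s).piecewise x z) :=
    hH fun v hv => (piecewise_insert_of_ne s x z hv).symm
  rw [hcard, hH', pow_succ]
  ring

variable {E : Finset V → (∀ v, X v) → ℝ}

lemma mobiusPotential_self (hEloc : ∀ c, DependsOn (E c) c)
    (hEnorm : ∀ (c : Finset V) y, (∃ t ∈ c, y t = z t) → E c y = 0) :
    mobiusPotential z q x (E q) = E q x := by
  rw [mobiusPotential_apply, sum_eq_single_of_mem q (mem_powerset_self q)]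
  · rw [Finset.sdiff_self, card_empty, pow_zero, one_mul]
    exact hEloc q fun v hv => piecewise_eq_of_mem q x z hv
  · intro s hs hsq
    obtain ⟨t, htq, hts⟩ := exists_of_ssubset (ssubset_of_subset_of_ne (mem_powerset.1 hs) hsq)
    rw [hEnorm q _ ⟨t, htq, piecewise_eq_of_notMem s x z hts⟩, mul_zero]

lemma mobiusPotential_of_ne (hEloc : ∀ c, DependsOn (E c) c)
    (hEnorm : ∀ (c : Finset V) y, (∃ t ∈ c, y t = z t) → E c y = 0)
    {c : Finset V} (hcq : c ≠ q) : mobiusPotential z q x (E c) = 0 := by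
  by_cases hqc : q ⊆ c
  · obtain ⟨t, htc, htq⟩ := exists_of_ssubset (ssubset_of_subset_of_ne hqc hcq.symm)
    refine sum_eq_zero fun s hs => ?_
    have hts : t ∉ s := fun h => htq (mem_powerset.1 hs h)
    rw [hEnorm c _ ⟨t, htc, piecewise_eq_of_notMem s x z hts⟩, mul_zero]
  · obtain ⟨t, htq, htc⟩ := not_subset.1 hqc
    exact mobiusPotential_eq_zero_of_dependsOn z x htq
      ((hEloc c).mono fun v hv (hvt : v = t) => htc (hvt ▸ hv))

lemma mobiusPotential_sum (hEloc : ∀ c, DependsOn (E c) c)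
    (hEnorm : ∀ (c : Finset V) y, (∃ t ∈ c, y t = z t) → E c y = 0)
    {C : Finset (Finset V)} (hqC : q ∈ C) :
    mobiusPotential z q x (fun y => ∑ c ∈ C, E c y) = E q x := by
  rw [← sum_fn, map_sum, sum_eq_single_of_mem q hqC fun c _ hcq =>
    mobiusPotential_of_ne z x hEloc hEnorm hcq, mobiusPotential_self z x hEloc hEnorm]

end MobiusInversion

lemma DependsOn.comp_left {ι β γ : Type*} {α : ι → Type*} {f : (∀ i, α i) → β} {s : Set ι}
    (hf : DependsOn f s) (g : β → γ) : DependsOn (fun x => g (f x)) s :=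
  fun _ _ h => congrArg g (hf h)

lemma dependsOn_finset_sum {ι κ : Type*} {α : ι → Type*} {C : Finset κ}
    {f : κ → (∀ i, α i) → ℝ} {s : Set ι} (hf : ∀ c ∈ C, DependsOn (f c) s) :
    DependsOn (fun x => ∑ c ∈ C, f c x) s :=
  fun _ _ h => sum_congr rfl fun c hc => hf c hc h

section Marginal

variable {V : Type*} [Fintype V] [DecidableEq V] {X : V → Type*} [∀ v, Fintype (X v)]
  [∀ v, DecidableEq (X v)]

lemma marginal_pos {a : (∀ v, X v) → ℝ} (ha : ∀ w, 0 < a w) (B : Finset V) (y : ∀ v, X v) :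
    0 < marginal a B y :=
  sum_pos' (fun w _ => by split_ifs <;> simp [(ha w).le])
    ⟨y, mem_univ y, by simp [ha y]⟩

lemma marginal_mul_left {f a : (∀ v, X v) → ℝ} {B : Finset V} (hf : DependsOn f B)
    (y : ∀ v, X v) : marginal (fun w => f w * a w) B y = f y * marginal a B y := by
  simp only [marginal, mul_sum]
  refine sum_congr rfl fun w _ => ?_
  split_ifs with h
  · rw [hf h]
  · rw [mul_zero]

lemma DependsOn.marginal {a : (∀ v, X v) → ℝ} {C : Set V} (ha : DependsOn a C) (B : Finset V) :
    DependsOn (marginal a B) (↑B ∩ C) := by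
  intro y y' h
  simp only [_root_.marginal, ← sum_filter]
  refine sum_nbij' (fun w => B.piecewise y' w) (fun w => B.piecewise y w) ?_ ?_ ?_ ?_ ?_
  · intro w _
    simp +contextual
  · intro w _
    simp +contextual
  · intro w hw
    ext v
    by_cases hv : v ∈ B <;> simp_all
  · intro w hw
    ext v
    by_cases hv : v ∈ B <;> simp_all
  · intro w hw
    refine ha fun v hvC => ?_
    by_cases hv : v ∈ B
    · simp only [mem_filter, mem_univ, true_and] at hw
      rw [piecewise_eq_of_mem B y' w hv, hw v hv, h v ⟨hv, hvC⟩]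
    · rw [piecewise_eq_of_notMem B y' w hv]

lemma marginal_mul_eq_mul_marginal {a b : (∀ v, X v) → ℝ} {A S : Finset V} (hSA : Disjoint S A)
    (ha : DependsOn a ↑(A ∪ S)) (hb : DependsOn b ↑Sᶜ) (y : ∀ v, X v) :
    marginal (fun w => a w * b w) A y = marginal a Sᶜ y * marginal b (A ∪ S) y := by
  simp only [marginal, ← sum_filter, sum_mul_sum, ← sum_product']
  refine sum_nbij' (fun w => (S.piecewise w y, S.piecewise y w)) (fun u => S.piecewise u.1 u.2)
    ?_ ?_ ?_ ?_ ?_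
  · intro w hw
    simp only [mem_filter, mem_univ, true_and, mem_product, mem_compl, mem_union] at hw ⊢
    constructor
    · intro v hv
      rw [piecewise_eq_of_notMem S w y hv]
    · rintro v (hv | hv)
      · rw [piecewise_eq_of_notMem S y w (disjoint_right.1 hSA hv), hw v hv]
      · rw [piecewise_eq_of_mem S y w hv]
  · intro u hu
    simp only [mem_filter, mem_univ, true_and, mem_product, mem_compl, mem_union] at hu ⊢
    intro v hv
    rw [piecewise_eq_of_notMem S _ _ (disjoint_right.1 hSA hv), hu.2 v (Or.inl hv)]
  · intro w _
    ext v
    by_cases hv : v ∈ S <;> simp [hv]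
  · intro u hu
    simp only [mem_filter, mem_univ, true_and, mem_product, mem_compl, mem_union] at hu
    ext v <;> by_cases hv : v ∈ S <;> simp [hv, hu.1 v, hu.2 v]
  · intro w hw
    simp only [mem_filter, mem_univ, true_and] at hw
    have haw : a w = a (S.piecewise w y) := ha fun v hv => by
      rcases mem_union.1 hv with hv | hv
      · rw [piecewise_eq_of_notMem S w y (disjoint_right.1 hSA hv), hw v hv]
      · rw [piecewise_eq_of_mem S w y hv]
    have hbw : b w = b (S.piecewise y w) := hb fun v hv =>
      (piecewise_eq_of_notMem S y w (mem_compl.1 hv)).symm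
    rw [haw, hbw]

lemma log_marginal_mul_exp_neg_add {K : ℝ} (hK : 0 < K) {HA HS HO : (∀ v, X v) → ℝ}
    {A S : Finset V} (hSA : Disjoint S A) (hA : DependsOn HA A) (hS : DependsOn HS ↑(A ∪ S))
    (hO : DependsOn HO ↑Sᶜ) (y : ∀ v, X v) :
    Real.log (marginal (fun w => K * Real.exp (-(HA w + HS w + HO w))) A y) =
      -HA y + Real.log (marginal (fun w => K * Real.exp (-HS w)) Sᶜ y) +
        Real.log (marginal (fun w => Real.exp (-HO w)) (A ∪ S) y) := by
  have hexp : (fun w => K * Real.exp (-(HA w + HS w + HO w))) =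
      fun w => Real.exp (-HA w) * (K * Real.exp (-HS w) * Real.exp (-HO w)) := by
    funext w
    rw [neg_add, neg_add, Real.exp_add, Real.exp_add]
    ring
  have hSpos := marginal_pos (fun w => mul_pos hK (Real.exp_pos (-HS w))) Sᶜ y
  have hOpos := marginal_pos (fun w => Real.exp_pos (-HO w)) (A ∪ S) y
  rw [hexp, marginal_mul_left (hA.comp_left fun t => Real.exp (-t)),
    marginal_mul_eq_mul_marginal hSA (hS.comp_left fun t => K * Real.exp (-t))
      (hO.comp_left fun t => Real.exp (-t)),
    Real.log_mul (Real.exp_pos _).ne' (mul_pos hSpos hOpos).ne', Real.log_mul hSpos.ne' hOpos.ne',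
    Real.log_exp, add_assoc]

end Marginal

namespace SimpleGraph

variable {V : Type*} {G : SimpleGraph V} {A : Set V} {i j u v : V}

def reachOutside (G : SimpleGraph V) (A : Set V) (i : V) : Set V :=
  {u | u ∉ A ∧ ∃ p : G.Walk i u, ∀ v ∈ p.support.tail, v ∉ A}

lemma mem_reachOutside_of_adj (hu : u ∉ A) (h : G.Adj i u) : u ∈ G.reachOutside A i :=
  ⟨hu, h.toWalk, by simpa using hu⟩

lemma mem_reachOutside_of_adj_of_mem (hu : u ∈ G.reachOutside A i) (hv : v ∉ A) (h : G.Adj u v) :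
    v ∈ G.reachOutside A i := by
  obtain ⟨-, p, hp⟩ := hu
  refine ⟨hv, p.concat h, fun w hw => ?_⟩
  rw [Walk.support_concat, ← p.cons_tail_support] at hw
  simp only [List.cons_append, List.tail_cons, List.mem_append, List.mem_singleton] at hw
  rcases hw with hw | rfl
  exacts [hp w hw, hv]

lemma relPathConn_of_mem_reachOutside [DecidableEq V] (hu : u ∈ G.reachOutside A i) (hi : i ∈ A)
    (hj : j ∈ A) (hij : i ≠ j) (h : G.Adj u j) : RelPathConn G A i j := by
  obtain ⟨huA, p, hp⟩ := hu
  have hP : ∀ v ∈ p.bypass.support.tail, v ∉ A := fun v hv => by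
    have hvi : v ≠ i := by
      rintro rfl
      have := p.bypass_isPath.support_nodup
      rw [← p.bypass.cons_tail_support] at this
      exact (List.nodup_cons.1 this).1 hv
    rcases p.mem_support_iff.1 (p.support_bypass_subset_support (List.mem_of_mem_tail hv))
      with hvi' | hv
    exacts [absurd hvi' hvi, hp v hv]
  have hjP : j ∉ p.bypass.support := fun hjP => by
    rcases p.bypass.mem_support_iff.1 hjP with rfl | hjP
    exacts [hij rfl, hP j hjP hj]
  have hinterior : (p.bypass.concat h).support.tail.dropLast = p.bypass.support.tail := by
    rw [Walk.support_concat, ← p.bypass.cons_tail_support]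
    simp
  refine ⟨p.bypass.concat h, p.bypass_isPath.concat hjP h, ?_, ?_⟩
  · rw [hinterior]
    exact List.ne_nil_of_mem <|
      Walk.end_mem_tail_support_of_ne (ne_of_mem_of_not_mem hi huA) p.bypass
  · rwa [hinterior]

lemma IsClique.subset_union_reachOutside {c : Set V} (hc : G.IsClique c) (hu : u ∈ c)
    (huR : u ∈ G.reachOutside A i) : c ⊆ A ∪ G.reachOutside A i := by
  intro v hv
  by_cases hvA : v ∈ A
  · exact Or.inl hvA
  rcases eq_or_ne u v with rfl | huv
  · exact Or.inr huR
  · exact Or.inr (mem_reachOutside_of_adj_of_mem huR hvA (hc hu hv huv))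

lemma IsClique.notMem_of_not_relPathConn [DecidableEq V] {c : Set V} (hc : G.IsClique c)
    (hu : u ∈ c) (huR : u ∈ G.reachOutside A i) (hi : i ∈ A) (hj : j ∈ A) (hij : i ≠ j)
    (hconn : ¬ RelPathConn G A i j) : j ∉ c := fun hjc =>
  hconn <| relPathConn_of_mem_reachOutside huR hi hj hij <|
    hc hu hjc (ne_of_mem_of_not_mem hj huR.1).symm

lemma IsClique.exists_mem_reachOutside {c : Set V} (hc : G.IsClique c) (hic : i ∈ c) (hi : i ∈ A)
    (hcA : ¬ c ⊆ A) : ∃ u ∈ c, u ∈ G.reachOutside A i := by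
  obtain ⟨u, huc, huA⟩ := Set.not_subset.1 hcA
  exact ⟨u, huc, mem_reachOutside_of_adj huA (hc hic huc (ne_of_mem_of_not_mem hi huA))⟩

end SimpleGraph

lemma dependsOn_of_isClique {V : Type*} {X : V → Type*} {G : SimpleGraph V}
    {E : Finset V → (∀ v, X v) → ℝ} (hEloc : ∀ c, DependsOn (E c) c)
    (hEclique : ∀ c : Finset V, (∃ x, E c x ≠ 0) → G.IsClique (c : Set V)) {c : Finset V}
    {D : Set V} (hcD : G.IsClique (c : Set V) → (c : Set V) ⊆ D) : DependsOn (E c) D := by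
  by_cases hE : ∃ x, E c x ≠ 0
  · exact (hEloc c).mono (hcD (hEclique c hE))
  · simp only [not_exists, not_not] at hE
    exact fun x y _ => by rw [hE x, hE y]

lemma exists_energy_split_of_not_relPathConn {V : Type*} [Fintype V] [DecidableEq V] {X : V → Type*}
    {G : SimpleGraph V} {E : Finset V → (∀ v, X v) → ℝ} (hEloc : ∀ c, DependsOn (E c) c)
    (hEclique : ∀ c : Finset V, (∃ x, E c x ≠ 0) → G.IsClique (c : Set V)) {A : Finset V}
    {i j : V} (hi : i ∈ A) (hj : j ∈ A) (hij : i ≠ j) (hconn : ¬ RelPathConn G A i j) :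
    ∃ (S : Finset V) (HS HO : (∀ v, X v) → ℝ), Disjoint S A ∧
      DependsOn HS ↑(A ∪ S) ∧ DependsOn HS {j}ᶜ ∧ DependsOn HO ↑Sᶜ ∧ DependsOn HO {i}ᶜ ∧
      ∀ w, ∑ c, E c w = ∑ c with c ⊆ A, E c w + HS w + HO w := by
  classical
  set R := G.reachOutside A i
  set S : Finset V := {v | v ∈ R}
  have hS : ∀ v, v ∈ S ↔ v ∈ R := by simp [S]
  refine ⟨S, fun w => ∑ c ∈ {c | ¬ c ⊆ A} with ¬ Disjoint c S, E c w,
    fun w => ∑ c ∈ {c | ¬ c ⊆ A} with Disjoint c S, E c w,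
    disjoint_left.2 fun v hv hvA => ((hS v).1 hv).1 hvA, ?_, ?_, ?_, ?_, fun w => ?_⟩
  · refine dependsOn_finset_sum fun c hc => dependsOn_of_isClique hEloc hEclique fun hcl => ?_
    obtain ⟨u, huc, huS⟩ := not_disjoint_iff.1 (mem_filter.1 hc).2
    intro v hv
    rcases hcl.subset_union_reachOutside huc ((hS u).1 huS) hv with hvA | hvR
    · simp [hvA]
    · simp [(hS v).2 hvR]
  · refine dependsOn_finset_sum fun c hc => dependsOn_of_isClique hEloc hEclique fun hcl => ?_
    obtain ⟨u, huc, huS⟩ := not_disjoint_iff.1 (mem_filter.1 hc).2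
    rintro v hv (rfl : v = j)
    exact hcl.notMem_of_not_relPathConn huc ((hS u).1 huS) hi hj hij hconn hv
  · refine dependsOn_finset_sum fun c hc => (hEloc c).mono fun v hv => ?_
    simpa using disjoint_left.1 (mem_filter.1 hc).2 hv
  · refine dependsOn_finset_sum fun c hc => dependsOn_of_isClique hEloc hEclique fun hcl => ?_
    simp only [mem_filter, mem_univ, true_and] at hc
    rintro v hv (rfl : v = i)
    obtain ⟨u, huc, huR⟩ := hcl.exists_mem_reachOutside hv hi (mod_cast hc.1)
    exact disjoint_left.1 hc.2 huc ((hS u).2 huR)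
  · rw [← sum_filter_add_sum_filter_not univ (· ⊆ A),
      ← sum_filter_add_sum_filter_not ({c | ¬ c ⊆ A} : Finset _) (Disjoint · S)]
    ring

theorem exists_log_marginal_eq_of_not_relPathConn {V : Type*} [Fintype V] [DecidableEq V]
    {X : V → Type*} [∀ v, Fintype (X v)] [∀ v, DecidableEq (X v)] {G : SimpleGraph V}
    {E : Finset V → (∀ v, X v) → ℝ} (hEloc : ∀ c, DependsOn (E c) c)
    (hEclique : ∀ c : Finset V, (∃ x, E c x ≠ 0) → G.IsClique (c : Set V)) {Z : ℝ} (hZ : 0 < Z)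
    {p : (∀ v, X v) → ℝ} (hp : ∀ x, p x = 1 / Z * Real.exp (-∑ c, E c x)) {A : Finset V}
    {i j : V} (hi : i ∈ A) (hj : j ∈ A) (hij : i ≠ j) (hconn : ¬ RelPathConn G A i j) :
    ∃ f g : (∀ v, X v) → ℝ, DependsOn f {j}ᶜ ∧ DependsOn g {i}ᶜ ∧
      ∀ y, Real.log (marginal p A y) = -∑ c with c ⊆ A, E c y + f y + g y := by
  obtain ⟨S, HS, HO, hSA, hSdep, hSj, hOdep, hOi, hsplit⟩ :=
    exists_energy_split_of_not_relPathConn hEloc hEclique hi hj hij hconn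
  have hA : DependsOn (fun y => ∑ c with c ⊆ A, E c y) A :=
    dependsOn_finset_sum fun c hc => (hEloc c).mono (mod_cast (mem_filter.1 hc).2)
  refine ⟨_, _,
    (((hSj.comp_left fun t => 1 / Z * Real.exp (-t)).marginal Sᶜ).mono
      Set.inter_subset_right).comp_left Real.log,
    (((hOi.comp_left fun t => Real.exp (-t)).marginal (A ∪ S)).mono
      Set.inter_subset_right).comp_left Real.log, fun y => ?_⟩
  simp only [funext hp, hsplit]
  exact log_marginal_mul_exp_neg_add (one_div_pos.2 hZ) hSA hA hSdep hOdep y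

lemma exists_energy_eq_sub_log_of_conditional {V : Type*} [DecidableEq V] {X : V → Type*}
    {j : V} [Fintype (X j)] [Nonempty (X j)] {m Zj H : (∀ v, X v) → ℝ} (hm : ∀ y, 0 < m y)
    (hZj : ∀ y, 0 < Zj y) (hZjloc : DependsOn Zj {j}ᶜ)
    (hrep : ∀ y, m y / ∑ t : X j, m (Function.update y j t) = 1 / Zj y * Real.exp (-H y)) :
    ∃ u : (∀ v, X v) → ℝ, DependsOn u {j}ᶜ ∧ ∀ y, H y = u y - Real.log (m y) := by
  refine ⟨fun y => Real.log (∑ t : X j, m (Function.update y j t)) - Real.log (Zj y),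
    fun y y' h => ?_, fun y => ?_⟩
  · have hupd : ∀ t, Function.update y j t = Function.update y' j t := fun t => by
      ext v
      rcases eq_or_ne v j with rfl | hv
      · simp
      · simp [hv, h v hv]
    simp only [hupd, hZjloc h]
  · have hD : 0 < ∑ t : X j, m (Function.update y j t) := sum_pos (fun t _ => hm _) univ_nonempty
    have h := congrArg Real.log (hrep y)
    rw [Real.log_div (hm y).ne' hD.ne', Real.log_mul (one_div_pos.2 (hZj y)).ne'
      (Real.exp_pos _).ne', Real.log_exp, one_div, Real.log_inv] at h
    linarith

theorem strongLAP_conditional_potential_general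
    {V : Type*} [Fintype V] [DecidableEq V] (X : V → Type*) [∀ v, Fintype (X v)]
    [∀ v, DecidableEq (X v)] (z : ∀ v, X v) (G : SimpleGraph V)
    (E : Finset V → (∀ v, X v) → ℝ)
    (hEloc : ∀ c x y, (∀ v ∈ c, x v = y v) → E c x = E c y)
    (hEnorm : ∀ (c : Finset V) x, (∃ t ∈ c, x t = z t) → E c x = 0)
    (hEclique : ∀ c : Finset V, (∃ x, E c x ≠ 0) → G.IsClique (c : Set V))
    (Z : ℝ) (hZ : 0 < Z) (p : (∀ v, X v) → ℝ)
    (hp : ∀ x, p x = (1 / Z) * Real.exp (-∑ c : Finset V, E c x))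
    (A q : Finset V)
    (j : V) (hjq : j ∈ q)
    (hlap : StrongLAP G (A : Set V) (q : Set V))
    (F : Finset V → (∀ v, X v) → ℝ)
    (hFloc : ∀ c x y, (∀ v ∈ c, x v = y v) → F c x = F c y)
    (hFnorm : ∀ (c : Finset V) x, (∃ t ∈ c, x t = z t) → F c x = 0)
    (Zj : (∀ v, X v) → ℝ) (hZjpos : ∀ x, 0 < Zj x)
    (hZjloc : ∀ x y, (∀ v, v ≠ j → x v = y v) → Zj x = Zj y)
    (hrep : ∀ x, marginal p A x / (∑ t : X j, marginal p A (Function.update x j t)) =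
        (1 / Zj x) * Real.exp (-∑ c : Finset V, F c x)) :
    F q = E q := by
  have hEloc' : ∀ c, DependsOn (E c) c := fun c _ _ h => hEloc c _ _ h
  obtain ⟨hqA, i, hi, k, hk, hik, hconn⟩ := hlap
  obtain ⟨f, g, hf, hg, hlog⟩ :=
    exists_log_marginal_eq_of_not_relPathConn hEloc' hEclique hZ hp (hqA hi) (hqA hk) hik hconn
  have : Nonempty (X j) := ⟨z j⟩
  obtain ⟨u, hu, hFsum⟩ := exists_energy_eq_sub_log_of_conditional (H := fun y => ∑ c, F c y)
    (marginal_pos (fun w => by rw [hp]; positivity) A) hZjpos (fun _ _ h => hZjloc _ _ h) hrep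
  have hF : (fun y => ∑ c, F c y) = u + (fun y => ∑ c with c ⊆ A, E c y) - f - g := by
    funext y
    simp only [Pi.add_apply, Pi.sub_apply, hFsum, hlog]
    ring
  funext x
  rw [← mobiusPotential_sum z x (fun c _ _ h => hFloc c _ _ h) hFnorm (mem_univ q), hF, map_sub,
    map_sub, map_add, mobiusPotential_sum z x hEloc' hEnorm (mem_filter.2 ⟨mem_univ q, hqA⟩),
    mobiusPotential_eq_zero_of_dependsOn z x hjq hu, mobiusPotential_eq_zero_of_dependsOn z x hk hf,
    mobiusPotential_eq_zero_of_dependsOn z x hi hg]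
  ring

/-- Under the hypotheses of the Strong LAP Argument, the joint distribution and the
conditional `p(x_j | x_{A_q ∖ {x_j}})` for any `x_j ∈ q` share the same
zero-normalized potential for `q`: any zero-normalized Gibbs representation `F` of
the conditional has `F q = E q`. -/
theorem strongLAP_conditional_potential
    {V : Type*} [Fintype V] [DecidableEq V] (X : V → Type*) [∀ v, Fintype (X v)]
    [∀ v, DecidableEq (X v)] (z : ∀ v, X v) (G : SimpleGraph V)
    (E : Finset V → (∀ v, X v) → ℝ)
    (hEloc : ∀ c x y, (∀ v ∈ c, x v = y v) → E c x = E c y)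
    (hEnorm : ∀ (c : Finset V) x, (∃ t ∈ c, x t = z t) → E c x = 0)
    (hEclique : ∀ c : Finset V, (∃ x, E c x ≠ 0) → G.IsClique (c : Set V))
    (Z : ℝ) (hZ : 0 < Z) (p : (∀ v, X v) → ℝ)
    (hp : ∀ x, p x = (1 / Z) * Real.exp (-∑ c : Finset V, E c x))
    (hsum : ∑ x, p x = 1)
    (A q : Finset V) (hq : G.IsClique (q : Set V)) (hqA : q ⊆ A)
    (j : V) (hjq : j ∈ q)
    (hlap : StrongLAP G (A : Set V) (q : Set V))
    (F : Finset V → (∀ v, X v) → ℝ)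
    (hFloc : ∀ c x y, (∀ v ∈ c, x v = y v) → F c x = F c y)
    (hFnorm : ∀ (c : Finset V) x, (∃ t ∈ c, x t = z t) → F c x = 0)
    (hFsupp : ∀ c : Finset V, ¬ c ⊆ A → ∀ x, F c x = 0)
    (Zj : (∀ v, X v) → ℝ) (hZjpos : ∀ x, 0 < Zj x)
    (hZjloc : ∀ x y, (∀ v, v ≠ j → x v = y v) → Zj x = Zj y)
    (hrep : ∀ x, marginal p A x / (∑ t : X j, marginal p A (Function.update x j t)) =
        (1 / Zj x) * Real.exp (-∑ c : Finset V, F c x)) :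
    F q = E q :=
  strongLAP_conditional_potential_general X z G E hEloc hEnorm hEclique Z hZ p hp A q j hjq hlap F
    hFloc hFnorm Zj hZjpos hZjloc hrep
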